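/- Let D be a finite set of unit disks in ℝ² with centers P, and assign to each center p ∈ P a vertical segment of length 2 anchored at its bottom endpoint (1P model). Then a subset P' ⊆ P admits a proper rotating labeling (no two segments ever intersect under simultaneous rotation) if and only if the unit disks centered at the points of P' are pairwise interior-disjoint. In particular, the maximum size of a proper labeling equals the maximum size of a pairwise-disjoint subset of D. -/

import Mathlib

open Real Set Metric

/-! Two segments of the same length `ℓ`, anchored at `p` and `q` and rotated by the same angle,
lie on parallel lines, so they can only meet when `q - p` points along the common direction, and
then they meet iff `‖q - p‖ < ℓ`. Since every direction is attained by some angle, the segments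
stay disjoint for all angles iff `ℓ ≤ dist p q`; for `ℓ = 2` this is exactly the condition for
the unit balls around `p` and `q` to be disjoint. -/

/-- The rotated vertical unit direction `(-sin θ, cos θ)`. -/
noncomputable def uDir (θ : ℝ) : EuclideanSpace ℝ (Fin 2) := WithLp.toLp 2 ![-Real.sin θ, Real.cos θ]

/-- Segment of length `ℓ` anchored at its bottom endpoint `p`, rotated by angle `θ`
(half-open convention for the top endpoint). -/
noncomputable def seg (p : EuclideanSpace ℝ (Fin 2)) (ℓ θ : ℝ) : Set (EuclideanSpace ℝ (Fin 2)) :=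
  (fun t : ℝ => p + t • uDir θ) '' Set.Ico 0 ℓ

lemma norm_uDir (θ : ℝ) : ‖uDir θ‖ = 1 := by
  simp [EuclideanSpace.norm_eq, uDir, Fin.sum_univ_two]

lemma exists_eq_norm_smul_uDir (v : EuclideanSpace ℝ (Fin 2)) : ∃ θ, v = ‖v‖ • uDir θ := by
  -- polar form of `v 1 - (v 0) i`, read off through `Complex.arg`
  set z : ℂ := ⟨v 1, -v 0⟩
  have hz : ‖z‖ = ‖v‖ := by
    rw [EuclideanSpace.norm_eq, Fin.sum_univ_two, Complex.norm_def, Complex.normSq_mk]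
    simp only [Real.norm_eq_abs, sq_abs]
    ring_nf
  refine ⟨z.arg, ?_⟩
  ext i
  fin_cases i
  · simp [uDir, ← hz, Complex.norm_mul_sin_arg, z]
  · simp [uDir, ← hz, Complex.norm_mul_cos_arg, z]

lemma dist_lt_of_not_disjoint_seg {p q : EuclideanSpace ℝ (Fin 2)} {ℓ θ : ℝ}
    (h : ¬Disjoint (seg p ℓ θ) (seg q ℓ θ)) : dist p q < ℓ := by
  obtain ⟨x, ⟨s, ⟨hs0, hsℓ⟩, rfl⟩, ⟨t, ⟨ht0, htℓ⟩, hx⟩⟩ := Set.not_disjoint_iff.1 h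
  have hpq : p - q = (t - s) • uDir θ := by
    rw [sub_smul, eq_sub_iff_add_eq, sub_add_eq_add_sub, sub_eq_iff_eq_add, add_comm _ q]
    exact hx.symm
  calc dist p q = |t - s| := by
        rw [dist_eq_norm, hpq, norm_smul, norm_uDir, Real.norm_eq_abs, mul_one]
    _ < ℓ := abs_sub_lt_of_nonneg_of_lt ht0 htℓ hs0 hsℓ

lemma exists_not_disjoint_seg_of_dist_lt {p q : EuclideanSpace ℝ (Fin 2)} {ℓ : ℝ}
    (h : dist p q < ℓ) : ∃ θ, ¬Disjoint (seg p ℓ θ) (seg q ℓ θ) := by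
  obtain ⟨θ, hθ⟩ := exists_eq_norm_smul_uDir (q - p)
  refine ⟨θ, Set.not_disjoint_iff.2 ⟨q, ⟨dist p q, ⟨dist_nonneg, h⟩, ?_⟩,
    ⟨0, ⟨le_rfl, dist_nonneg.trans_lt h⟩, by simp⟩⟩⟩
  show p + dist p q • uDir θ = q
  rw [dist_comm, dist_eq_norm, ← hθ, add_sub_cancel]

lemma forall_disjoint_seg_iff {p q : EuclideanSpace ℝ (Fin 2)} {ℓ : ℝ} :
    (∀ θ, Disjoint (seg p ℓ θ) (seg q ℓ θ)) ↔ ℓ ≤ dist p q := by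
  constructor
  · intro h
    by_contra! hlt
    obtain ⟨θ, hθ⟩ := exists_not_disjoint_seg_of_dist_lt hlt
    exact hθ (h θ)
  · intro h θ
    by_contra hθ
    exact (dist_lt_of_not_disjoint_seg hθ).not_ge h

theorem stmt11_general (P' : Finset (EuclideanSpace ℝ (Fin 2))) :
    (∀ θ : ℝ, ∀ p ∈ P', ∀ q ∈ P', p ≠ q → Disjoint (seg p 2 θ) (seg q 2 θ)) ↔
    (∀ p ∈ P', ∀ q ∈ P', p ≠ q →
      Disjoint (Metric.ball p 1) (Metric.ball q 1)) := by
  have key : ∀ p q : EuclideanSpace ℝ (Fin 2),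
      (∀ θ, Disjoint (seg p 2 θ) (seg q 2 θ)) ↔ Disjoint (ball p 1) (ball q 1) := by
    intro p q
    rw [forall_disjoint_seg_iff, disjoint_ball_ball_iff one_pos one_pos, one_add_one_eq_two]
  constructor
  · exact fun h p hp q hq hne => (key p q).1 fun θ => h θ p hp q hq hne
  · exact fun h θ p hp q hq hne => (key p q).2 (h p hp q hq hne) θ

/-- Reduction between GMIS for unit disks and MRIS for segments of length 2 in the 1P model:
a subset `P'` of the centres admits a proper rotating labeling if and only if the unit disks
centred at the points of `P'` are pairwise interior-disjoint. -/
theorem stmt11 (P P' : Finset (EuclideanSpace ℝ (Fin 2))) (hsub : P' ⊆ P) :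
    (∀ θ : ℝ, ∀ p ∈ P', ∀ q ∈ P', p ≠ q → Disjoint (seg p 2 θ) (seg q 2 θ)) ↔
    (∀ p ∈ P', ∀ q ∈ P', p ≠ q →
      Disjoint (Metric.ball p 1) (Metric.ball q 1)) :=
  stmt11_general P'
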